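/- Suppose a group G acts geometrically on a CAT(0) space X and suppose g0 ∈ G has finite centralizer Z_{g0}, X \ F_{g0} is not connected, and each connected component of X \ F_{g0} is convex and not g0-invariant. Fix a basepoint x0 ∈ X and N > 0 with F_{g0} ⊆ B(x0, N). Then for every g ∈ G with d(x0, g x0) > 2N there exists h ∈ G of infinite order such that d(g x0, Im ξ_{h^∞}) ≤ N, where ξ_{h^∞} is the geodesic ray in X with ξ_{h^∞}(0) = x0 and ξ_{h^∞}(∞) = h^∞. -/

import Mathlib

/-!
Put `r = g g₀ g⁻¹` and `h = r g₀`. The walls `A = F_{g₀} ⊆ B(x₀, N)` and `B = F_r = g A ⊆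
B(g x₀, N)` are at distance at least `γ = d(x₀, g x₀) - 2N > 0`. Everything off the component of
`X \ A` containing `g x₀` lies in the component `U` of `X \ B` containing `x₀`, and vice versa,
while `g₀` and `r` push every point off its component of the complement of their walls. This is a
ping-pong: `h` maps `X \ U` into itself, and a geodesic from `B` to a point of `h ^ (m + 1) (X \ U)`
crosses the `m` walls `h ^ k B`, `1 ≤ k ≤ m`, consecutive ones `2γ` apart. So the orbits of `h`
grow linearly and `h` has infinite order.

For `n ≪ m` the geodesic `[x₀, h ^ m x₀]` therefore crosses `h ^ n A` and `B`, i.e. passes within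
`N` of `h ^ n x₀` and of `g x₀`. By convexity of the CAT(0) metric these geodesics converge to a
ray, which still passes within `N` of `g x₀`; the limit exists since a space with a proper
cocompact isometric action is complete.
-/

open Metric Set Filter Pointwise

/-- A unit-speed geodesic segment from `x` to `y`, parametrized on `[0, dist x y]`. -/
def IsGeodesicFromTo {X : Type*} [MetricSpace X] (f : ℝ → X) (x y : X) : Prop :=
  f 0 = x ∧ f (dist x y) = y ∧
    ∀ s ∈ Set.Icc (0 : ℝ) (dist x y), ∀ t ∈ Set.Icc (0 : ℝ) (dist x y),
      dist (f s) (f t) = |s - t|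

/-- A geodesic metric space: any two points are joined by a geodesic segment. -/
def IsGeodesicSpace (X : Type*) [MetricSpace X] : Prop :=
  ∀ x y : X, ∃ f : ℝ → X, IsGeodesicFromTo f x y

/-- A CAT(0) space: a geodesic space all of whose geodesic triangles satisfy the CAT(0)
comparison inequality (stated here in its standard equivalent form: the comparison
inequality for a point `z` and a point on a geodesic from `x` to `y`). -/
def IsCAT0Space (X : Type*) [MetricSpace X] : Prop :=
  IsGeodesicSpace X ∧
    ∀ (x y z : X) (f : ℝ → X), IsGeodesicFromTo f x y →
      ∀ t ∈ Set.Icc (0 : ℝ) 1,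
        dist z (f (t * dist x y)) ^ 2 ≤
          (1 - t) * dist z x ^ 2 + t * dist z y ^ 2 - t * (1 - t) * dist x y ^ 2

/-- A subset `C` is (geodesically) convex: every geodesic segment between points of `C`
lies in `C`. -/
def GeodesicConvex {X : Type*} [MetricSpace X] (C : Set X) : Prop :=
  ∀ x ∈ C, ∀ y ∈ C, ∀ f : ℝ → X, IsGeodesicFromTo f x y →
    ∀ t ∈ Set.Icc (0 : ℝ) (dist x y), f t ∈ C

/-- A geometric action: an action by isometries which is proper and cocompact. -/
structure IsGeometricAction (G X : Type*) [Group G] [MetricSpace X] [MulAction G X] : Prop where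
  isometry : ∀ g : G, Isometry (fun x : X => g • x)
  proper : ∀ K : Set X, IsCompact K →
    {g : G | ((fun x : X => g • x) '' K ∩ K).Nonempty}.Finite
  cocompact : ∃ K : Set X, IsCompact K ∧ ⋃ g : G, (fun x : X => g • x) '' K = Set.univ

/-- A unit-speed geodesic ray starting at `x0`. -/
def IsGeodesicRayFrom {X : Type*} [MetricSpace X] (x0 : X) (ξ : ℝ → X) : Prop :=
  ξ 0 = x0 ∧ ∀ s t : ℝ, 0 ≤ s → 0 ≤ t → dist (ξ s) (ξ t) = |s - t|

/-- The boundary of a proper CAT(0) space, modelled as the set of geodesic rays emanating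
from the basepoint `x0`; the cone topology coincides with the topology of pointwise
convergence of rays (as a subspace of `ℝ → X` with the product topology). -/
abbrev Boundary (X : Type*) [MetricSpace X] (x0 : X) : Type _ :=
  {ξ : ℝ → X // IsGeodesicRayFrom x0 ξ}

/-- Two maps `ℝ → X` are asymptotic if they are at bounded distance on `[0, ∞)`. -/
def AsymptoticMaps {X : Type*} [MetricSpace X] (f g : ℝ → X) : Prop :=
  ∃ C : ℝ, ∀ t : ℝ, 0 ≤ t → dist (f t) (g t) ≤ C

/-- The image `Im ξ` of a geodesic ray `ξ` (on `[0, ∞)`). -/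
def rayImage {X : Type*} [MetricSpace X] {x0 : X} (ξ : Boundary X x0) : Set X :=
  ξ.1 '' Set.Ici (0 : ℝ)

/-- A sequence of points of `X` converges, in the cone topology on `X ∪ ∂X`, to the
boundary point `β`: the distances from the basepoint tend to infinity, and the geodesic
segments from the basepoint to the points of the sequence converge pointwise to the ray
representing `β`. -/
def TendstoBoundary {X : Type*} [MetricSpace X] (x0 : X) (x : ℕ → X) (β : Boundary X x0) : Prop :=
  Tendsto (fun n => dist x0 (x n)) atTop atTop ∧
    ∀ f : ℕ → ℝ → X, (∀ n, IsGeodesicFromTo (f n) x0 (x n)) →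
      ∀ t : ℝ, 0 ≤ t →
        Tendsto (fun n => f n (min t (dist x0 (x n)))) atTop (nhds (β.1 t))

open MulAction Topology

theorem IsPreconnected.subset_connectedComponentIn_of_mem {α : Type*} [TopologicalSpace α]
    {s F : Set α} {x p : α} (hs : IsPreconnected s) (hsF : s ⊆ F) (hx : x ∈ s)
    (hxp : x ∈ _root_.connectedComponentIn F p) : s ⊆ _root_.connectedComponentIn F p := by
  rw [connectedComponentIn_eq hxp]
  exact hs.subset_connectedComponentIn hx hsF

section Geodesic

variable {X : Type*} [MetricSpace X]

namespace IsGeodesicFromTo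

variable {f f' : ℝ → X} {x y y' : X} {s t : ℝ}

theorem dist_left (hf : IsGeodesicFromTo f x y) (ht : t ∈ Icc 0 (dist x y)) :
    dist x (f t) = t := by
  rw [← hf.1, hf.2.2 0 ⟨le_rfl, dist_nonneg⟩ t ht, zero_sub, abs_neg, abs_of_nonneg ht.1]

theorem dist_right (hf : IsGeodesicFromTo f x y) (ht : t ∈ Icc 0 (dist x y)) :
    dist (f t) y = dist x y - t := by
  conv_lhs => rw [← hf.2.1]
  rw [hf.2.2 t ht _ ⟨dist_nonneg, le_rfl⟩, abs_of_nonpos (by linarith [ht.2])]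
  ring

theorem restrict (hf : IsGeodesicFromTo f x y) (hs : s ∈ Icc 0 (dist x y)) :
    IsGeodesicFromTo f x (f s) := by
  rw [IsGeodesicFromTo, hf.dist_left hs]
  exact ⟨hf.1, rfl, fun u hu v hv =>
    hf.2.2 u ⟨hu.1, hu.2.trans hs.2⟩ v ⟨hv.1, hv.2.trans hs.2⟩⟩

theorem comp_isometry (hf : IsGeodesicFromTo f x y) {φ : X → X} (hφ : Isometry φ) :
    IsGeodesicFromTo (φ ∘ f) (φ x) (φ y) := by
  rw [IsGeodesicFromTo, hφ.dist_eq]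
  exact ⟨by simp [hf.1], by simp [hf.2.1], fun u hu v hv => by
    simp only [Function.comp_apply, hφ.dist_eq, hf.2.2 u hu v hv]⟩

theorem isPreconnected_image (hf : IsGeodesicFromTo f x y) :
    IsPreconnected (f '' Icc 0 (dist x y)) := by
  refine isPreconnected_Icc.image f (LipschitzOnWith.continuousOn (K := 1) ?_)
  refine LipschitzOnWith.of_dist_le_mul fun u hu v hv => ?_
  rw [hf.2.2 u hu v hv, Real.dist_eq, NNReal.coe_one, one_mul]

theorem mem_connectedComponentIn_iff (hf : IsGeodesicFromTo f x y) {W : Set X} {p : X}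
    (hW : ∀ t ∈ Icc 0 (dist x y), f t ∉ W) :
    x ∈ connectedComponentIn Wᶜ p ↔ y ∈ connectedComponentIn Wᶜ p := by
  have hsub : f '' Icc 0 (dist x y) ⊆ Wᶜ := by
    rintro _ ⟨t, ht, rfl⟩
    exact hW t ht
  have hx : x ∈ f '' Icc 0 (dist x y) := ⟨0, ⟨le_rfl, dist_nonneg⟩, hf.1⟩
  have hy : y ∈ f '' Icc 0 (dist x y) := ⟨dist x y, ⟨dist_nonneg, le_rfl⟩, hf.2.1⟩
  exact ⟨fun h => hf.isPreconnected_image.subset_connectedComponentIn_of_mem hsub hx h hy,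
    fun h => hf.isPreconnected_image.subset_connectedComponentIn_of_mem hsub hy h hx⟩

theorem exists_mem_of_mem_of_notMem (hf : IsGeodesicFromTo f x y) {W : Set X} {p : X}
    (hx : x ∈ connectedComponentIn Wᶜ p) (hy : y ∉ connectedComponentIn Wᶜ p) :
    ∃ t ∈ Icc 0 (dist x y), f t ∈ W := by
  by_contra! hW
  exact hy ((hf.mem_connectedComponentIn_iff hW).1 hx)

theorem exists_mem_of_notMem_of_mem (hf : IsGeodesicFromTo f x y) {W : Set X} {p : X}
    (hx : x ∉ connectedComponentIn Wᶜ p) (hy : y ∈ connectedComponentIn Wᶜ p) :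
    ∃ t ∈ Icc 0 (dist x y), f t ∈ W := by
  by_contra! hW
  exact hx ((hf.mem_connectedComponentIn_iff hW).2 hy)

/-- The comparison inequality at `f' t` against the geodesic `f` has right-hand side `0`. -/
theorem eqOn (hX : IsCAT0Space X) (hf : IsGeodesicFromTo f x y)
    (hf' : IsGeodesicFromTo f' x y) : EqOn f f' (Icc 0 (dist x y)) := by
  intro t ht
  rcases (dist_nonneg : 0 ≤ dist x y).eq_or_lt with h0 | h0
  · obtain rfl : t = 0 := le_antisymm (h0 ▸ ht.2) ht.1
    rw [hf.1, hf'.1]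
  · have key := hX.2 x y (f' t) f hf (t / dist x y)
      ⟨div_nonneg ht.1 h0.le, div_le_one_of_le₀ ht.2 h0.le⟩
    rw [div_mul_cancel₀ t h0.ne', dist_comm (f' t) x, hf'.dist_left ht, hf'.dist_right ht,
      dist_comm] at key
    have hzero : dist (f t) (f' t) ^ 2 ≤ 0 := by
      refine key.trans_eq ?_
      field_simp
      ring
    exact dist_le_zero.1 (by nlinarith [dist_nonneg (x := f t) (y := f' t)])

theorem dist_le_mul (hX : IsCAT0Space X) (hf : IsGeodesicFromTo f x y)
    (hf' : IsGeodesicFromTo f' x y') {l : ℝ} (hl : l ∈ Icc (0 : ℝ) 1) :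
    dist (f (l * dist x y)) (f' (l * dist x y')) ≤ l * dist y y' := by
  have hmem : l * dist x y' ∈ Icc 0 (dist x y') :=
    ⟨mul_nonneg hl.1 dist_nonneg, mul_le_of_le_one_left dist_nonneg hl.2⟩
  have h₁ := hX.2 x y (f' (l * dist x y')) f hf l hl
  have h₂ := hX.2 x y' y f' hf' l hl
  rw [dist_comm (f' _) x, hf'.dist_left hmem, dist_comm (f' _) y] at h₁
  rw [dist_comm y x] at h₂
  rw [dist_comm, ← sq_le_sq₀ dist_nonneg (mul_nonneg hl.1 dist_nonneg)]
  nlinarith [hl.1, hl.2]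

end IsGeodesicFromTo

theorem IsGeodesicSpace.isPreconnected_univ (hX : IsGeodesicSpace X) :
    IsPreconnected (univ : Set X) := by
  refine isPreconnected_of_forall_pair fun x _ y _ => ?_
  obtain ⟨f, hf⟩ := hX x y
  exact ⟨f '' Icc 0 (dist x y), subset_univ _, ⟨0, ⟨le_rfl, dist_nonneg⟩, hf.1⟩,
    ⟨dist x y, ⟨dist_nonneg, le_rfl⟩, hf.2.1⟩, hf.isPreconnected_image⟩

theorem IsGeodesicSpace.closedBall_subset_connectedComponentIn (hX : IsGeodesicSpace X)
    {W : Set X} {p : X} {R : ℝ} (hW : Disjoint (closedBall p R) W) :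
    closedBall p R ⊆ connectedComponentIn Wᶜ p := by
  intro q hq
  obtain ⟨f, hf⟩ := hX p q
  have hp : p ∈ closedBall p R := mem_closedBall_self (dist_nonneg.trans (mem_closedBall'.1 hq))
  refine (hf.mem_connectedComponentIn_iff fun t ht hft => hW.notMem_of_mem_left ?_ hft).1
    (mem_connectedComponentIn (hW.notMem_of_mem_left hp))
  rw [mem_closedBall', hf.dist_left ht]
  exact ht.2.trans (mem_closedBall'.1 hq)

end Geodesic

section Components

variable {G X : Type*} [Group G] [TopologicalSpace X] [MulAction G X]

variable (X) in
/-- The non-invariance of the components of `X \ F_c` assumed of `g₀` in the theorem. -/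
def MovesComponents (c : G) : Prop :=
  ∀ x ∈ (fixedBy X c)ᶜ,
    c • connectedComponentIn (fixedBy X c)ᶜ x ≠ connectedComponentIn (fixedBy X c)ᶜ x

theorem MovesComponents.inv {c : G} (h : MovesComponents X c) : MovesComponents X c⁻¹ := by
  intro x hx hinv
  rw [fixedBy_inv] at hx hinv
  apply h x hx
  conv_lhs => rw [← hinv]
  exact smul_inv_smul c _

variable [ContinuousConstSMul G X]

theorem smul_connectedComponentIn (c : G) {F : Set X} {x : X} (hx : x ∈ F) :
    c • connectedComponentIn F x = connectedComponentIn (c • F) (c • x) :=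
  (Homeomorph.smul c).image_connectedComponentIn hx

namespace MovesComponents

variable {c : G}

theorem smul_notMem (h : MovesComponents X c) {p z : X}
    (hz : z ∈ connectedComponentIn (fixedBy X c)ᶜ p) :
    c • z ∉ connectedComponentIn (fixedBy X c)ᶜ p ∧ c • z ∉ fixedBy X c := by
  have hzF : z ∉ fixedBy X c := connectedComponentIn_subset _ _ hz
  rw [connectedComponentIn_eq hz]
  refine ⟨fun hcz => h z hzF ?_, fun hcz => hzF (smul_mem_fixedBy_iff_mem_fixedBy.1 hcz)⟩
  rw [smul_connectedComponentIn c hzF, movedBy_mem_fixedBy_of_commute (Commute.refl c),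
    connectedComponentIn_eq hcz]

theorem conj (h : MovesComponents X c) (g : G) : MovesComponents X (g * c * g⁻¹) := by
  intro x hx hconj
  rw [← smul_fixedBy, ← smul_set_compl] at hx hconj
  have hx' : g⁻¹ • x ∈ (fixedBy X c)ᶜ := mem_smul_set_iff_inv_smul_mem.1 hx
  have hcomp := smul_connectedComponentIn g hx'
  rw [smul_inv_smul] at hcomp
  rw [← hcomp, mul_smul, mul_smul, inv_smul_smul] at hconj
  exact h _ hx' (MulAction.injective g hconj)

end MovesComponents

end Components

/-- A geodesic from `z` to `p₂` meets `W₁`; up to that point it is too far from `p₂` to meet `W₂`,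
and the point where it meets `W₁` is within `N` of `p₁`. -/
theorem IsGeodesicSpace.mem_connectedComponentIn_of_notMem {X : Type*} [MetricSpace X]
    (hX : IsGeodesicSpace X) {W₁ W₂ : Set X} {p₁ p₂ z : X} {N : ℝ}
    (h₁ : W₁ ⊆ closedBall p₁ N) (h₂ : W₂ ⊆ closedBall p₂ N) (hp : 2 * N < dist p₁ p₂)
    (hz : z ∉ connectedComponentIn W₁ᶜ p₂) : z ∈ connectedComponentIn W₂ᶜ p₁ := by
  have far₁ : ∀ q ∈ W₁, N < dist q p₂ := fun q hq => by
    linarith [mem_closedBall'.1 (h₁ hq), dist_triangle p₁ q p₂]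
  have far₂ : ∀ q ∈ W₂, N < dist q p₁ := fun q hq => by
    linarith [mem_closedBall.1 (h₂ hq), dist_triangle p₁ q p₂, dist_comm p₁ q]
  have hp₂ : p₂ ∈ connectedComponentIn W₁ᶜ p₂ := mem_connectedComponentIn fun h => by
    linarith [mem_closedBall'.1 (h₁ h), dist_nonneg (x := p₁) (y := p₂)]
  obtain ⟨f, hf⟩ := hX z p₂
  obtain ⟨t, ht, hft⟩ := hf.exists_mem_of_notMem_of_mem hz hp₂
  have hball : f t ∈ connectedComponentIn W₂ᶜ p₁ :=
    hX.closedBall_subset_connectedComponentIn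
      (disjoint_left.2 fun q hq hq₂ => by linarith [far₂ q hq₂, mem_closedBall.1 hq]) (h₁ hft)
  refine ((hf.restrict ht).mem_connectedComponentIn_iff fun s hs hfs => ?_).2 hball
  rw [hf.dist_left ht] at hs
  have hs' : s ∈ Icc 0 (dist z p₂) := ⟨hs.1, hs.2.trans ht.2⟩
  linarith [far₁ _ hft, mem_closedBall.1 (h₂ hfs), hf.dist_right ht, hf.dist_right hs', hs.2]

section PingPong

variable {G X : Type*} [Group G] [MetricSpace X] [MulAction G X]

/-- The configuration of `g₀` and its conjugate `g g₀ g⁻¹` in the theorem, with `p₁ = x₀` and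
`p₂ = g x₀`. -/
structure PingPong (c₁ c₂ : G) (p₁ p₂ : X) (N : ℝ) : Prop where
  moves₁ : MovesComponents X c₁
  moves₂ : MovesComponents X c₂
  fixedBy₁_subset : fixedBy X c₁ ⊆ closedBall p₁ N
  fixedBy₂_subset : fixedBy X c₂ ⊆ closedBall p₂ N
  lt_dist : 2 * N < dist p₁ p₂

namespace PingPong

variable {c₁ c₂ : G} {p₁ p₂ : X} {N : ℝ}

theorem symm_inv (hP : PingPong c₁ c₂ p₁ p₂ N) : PingPong c₂⁻¹ c₁⁻¹ p₂ p₁ N where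
  moves₁ := hP.moves₂.inv
  moves₂ := hP.moves₁.inv
  fixedBy₁_subset := by rw [fixedBy_inv]; exact hP.fixedBy₂_subset
  fixedBy₂_subset := by rw [fixedBy_inv]; exact hP.fixedBy₁_subset
  lt_dist := by rw [dist_comm]; exact hP.lt_dist

theorem notMem_fixedBy₂ (hP : PingPong c₁ c₂ p₁ p₂ N) : p₁ ∉ fixedBy X c₂ := fun h => by
  linarith [mem_closedBall.1 (hP.fixedBy₂_subset h), hP.lt_dist, dist_nonneg (x := p₁) (y := p₂)]

theorem sub_le_dist (hP : PingPong c₁ c₂ p₁ p₂ N) {a b : X} (ha : a ∈ fixedBy X c₁)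
    (hb : b ∈ fixedBy X c₂) : dist p₁ p₂ - 2 * N ≤ dist a b := by
  linarith [mem_closedBall'.1 (hP.fixedBy₁_subset ha), mem_closedBall.1 (hP.fixedBy₂_subset hb),
    dist_triangle4 p₁ a b p₂]

theorem mem_of_notMem₁ (hP : PingPong c₁ c₂ p₁ p₂ N) (hX : IsGeodesicSpace X) {z : X}
    (hz : z ∉ connectedComponentIn (fixedBy X c₁)ᶜ p₂) :
    z ∈ connectedComponentIn (fixedBy X c₂)ᶜ p₁ :=
  hX.mem_connectedComponentIn_of_notMem hP.fixedBy₁_subset hP.fixedBy₂_subset hP.lt_dist hz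

theorem mem_of_notMem₂ (hP : PingPong c₁ c₂ p₁ p₂ N) (hX : IsGeodesicSpace X) {z : X}
    (hz : z ∉ connectedComponentIn (fixedBy X c₂)ᶜ p₁) :
    z ∈ connectedComponentIn (fixedBy X c₁)ᶜ p₂ :=
  hX.mem_connectedComponentIn_of_notMem hP.fixedBy₂_subset hP.fixedBy₁_subset
    (by rw [dist_comm]; exact hP.lt_dist) hz

variable [IsIsometricSMul G X]

theorem mul_smul_notMem (hP : PingPong c₁ c₂ p₁ p₂ N) (hX : IsGeodesicSpace X) {z : X}
    (hz : z ∉ connectedComponentIn (fixedBy X c₂)ᶜ p₁) :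
    (c₂ * c₁) • z ∉ connectedComponentIn (fixedBy X c₂)ᶜ p₁ ∧ (c₂ * c₁) • z ∉ fixedBy X c₂ := by
  rw [mul_smul]
  exact hP.moves₂.smul_notMem
    (hP.mem_of_notMem₁ hX (hP.moves₁.smul_notMem (hP.mem_of_notMem₂ hX hz)).1)

theorem pow_smul_notMem (hP : PingPong c₁ c₂ p₁ p₂ N) (hX : IsGeodesicSpace X) {z : X}
    (hz : z ∉ connectedComponentIn (fixedBy X c₂)ᶜ p₁) (n : ℕ) :
    (c₂ * c₁) ^ n • z ∉ connectedComponentIn (fixedBy X c₂)ᶜ p₁ := by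
  induction n with
  | zero => rwa [pow_zero, one_smul]
  | succ n ih =>
    rw [pow_succ', mul_smul]
    exact (hP.mul_smul_notMem hX ih).1

/-- A geodesic from `b` to `c₁ • b'`, which is as far from `b` as `(c₂ * c₁) • b'`, crosses
`fixedBy X c₁`; the latter is at distance at least `d(p₁, p₂) - 2N` from `b` and from `b'`. -/
theorem two_mul_le_dist_mul_smul (hP : PingPong c₁ c₂ p₁ p₂ N) (hX : IsGeodesicSpace X)
    {b b' : X} (hb : b ∈ fixedBy X c₂) (hb' : b' ∈ fixedBy X c₂) :
    2 * (dist p₁ p₂ - 2 * N) ≤ dist b ((c₂ * c₁) • b') := by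
  have hside : ∀ w ∈ fixedBy X c₂, w ∈ connectedComponentIn (fixedBy X c₁)ᶜ p₂ :=
    fun w hw => hP.mem_of_notMem₂ hX fun h => connectedComponentIn_subset _ _ h hw
  obtain ⟨f, hf⟩ := hX b (c₁ • b')
  obtain ⟨t, ht, hft⟩ :=
    hf.exists_mem_of_mem_of_notMem (hside b hb) (hP.moves₁.smul_notMem (hside b' hb')).1
  have e₁ : dist b ((c₂ * c₁) • b') = dist b (c₁ • b') :=
    calc dist b ((c₂ * c₁) • b') = dist (c₂ • b) (c₂ • c₁ • b') := by rw [hb, mul_smul]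
      _ = dist b (c₁ • b') := dist_smul _ _ _
  have e₂ : dist (f t) (c₁ • b') = dist (f t) b' :=
    calc dist (f t) (c₁ • b') = dist (c₁ • f t) (c₁ • b') := by rw [hft]
      _ = dist (f t) b' := dist_smul _ _ _
  linarith [hf.dist_left ht, hf.dist_right ht, hP.sub_le_dist hft hb, hP.sub_le_dist hft hb',
    dist_comm b (f t)]

/-- A geodesic from `b` to `z` crosses the walls `(c₂ * c₁) ^ k • fixedBy X c₂`, `1 ≤ k ≤ m`,
consecutive ones being `2 (d(p₁, p₂) - 2N)` apart by `two_mul_le_dist_mul_smul`. -/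
theorem mul_le_dist (hP : PingPong c₁ c₂ p₁ p₂ N) (hX : IsGeodesicSpace X) (m : ℕ) {b z : X}
    (hb : b ∈ fixedBy X c₂)
    (hz : ((c₂ * c₁) ^ (m + 1))⁻¹ • z ∉ connectedComponentIn (fixedBy X c₂)ᶜ p₁) :
    2 * (dist p₁ p₂ - 2 * N) * m ≤ dist b z := by
  induction m generalizing b z with
  | zero => simp
  | succ m ih =>
    have hz' :
        ((c₂ * c₁) ^ (m + 1))⁻¹ • (c₂ * c₁)⁻¹ • z ∉ connectedComponentIn (fixedBy X c₂)ᶜ p₁ := by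
      rwa [smul_smul, ← mul_inv_rev, ← pow_succ']
    have hout : (c₂ * c₁)⁻¹ • z ∉ connectedComponentIn (fixedBy X c₂)ᶜ p₁ := by
      simpa using hP.pow_smul_notMem hX hz' (m + 1)
    have hin : (c₂ * c₁)⁻¹ • b ∈ connectedComponentIn (fixedBy X c₂)ᶜ p₁ := by
      by_contra hcon
      exact (hP.mul_smul_notMem hX hcon).2 (by rwa [smul_inv_smul])
    obtain ⟨f, hf⟩ := hX ((c₂ * c₁)⁻¹ • b) ((c₂ * c₁)⁻¹ • z)
    obtain ⟨t, ht, hft⟩ := hf.exists_mem_of_mem_of_notMem hin hout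
    have hgap := hP.two_mul_le_dist_mul_smul hX hb hft
    rw [← dist_smul (c₂ * c₁)⁻¹ b, inv_smul_smul] at hgap
    have hsplit : dist b z = dist ((c₂ * c₁)⁻¹ • b) (f t) + dist (f t) ((c₂ * c₁)⁻¹ • z) := by
      rw [hf.dist_left ht, hf.dist_right ht, dist_smul]
      ring
    push_cast
    linarith [ih hft hz']

theorem eventually_pow_smul_notMem (hP : PingPong c₁ c₂ p₁ p₂ N) (hX : IsGeodesicSpace X)
    {b : X} (hb : b ∈ fixedBy X c₂) (x : X) :
    ∀ᶠ m in atTop, (c₂ * c₁) ^ m • x ∉ connectedComponentIn (fixedBy X c₂)ᶜ p₁ := by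
  have hγ : 0 < 2 * (dist p₁ p₂ - 2 * N) := by linarith [hP.lt_dist]
  obtain ⟨m₀, hm₀⟩ := exists_nat_gt (dist b x / (2 * (dist p₁ p₂ - 2 * N)))
  refine eventually_atTop.2 ⟨m₀ + 1, fun m hm hx => ?_⟩
  obtain ⟨m, rfl⟩ : ∃ k, m = k + 1 := ⟨m - 1, by omega⟩
  have hb' : b ∉ connectedComponentIn (fixedBy X c₂)ᶜ p₁ :=
    fun h => connectedComponentIn_subset _ _ h hb
  have hdeep := hP.pow_smul_notMem hX hb' (m + 1)
  obtain ⟨f, hf⟩ := hX ((c₂ * c₁) ^ (m + 1) • x) ((c₂ * c₁) ^ (m + 1) • b)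
  obtain ⟨t, ht, hft⟩ := hf.exists_mem_of_mem_of_notMem hx hdeep
  have hgrowth := hP.mul_le_dist hX m hft (z := (c₂ * c₁) ^ (m + 1) • b) (by rwa [inv_smul_smul])
  rw [hf.dist_right ht, dist_smul] at hgrowth
  have hm' : (m₀ : ℝ) ≤ m := by exact_mod_cast (by omega : m₀ ≤ m)
  rw [div_lt_iff₀ hγ] at hm₀
  nlinarith [ht.1, dist_comm b x]

theorem tendsto_dist_pow_smul (hP : PingPong c₁ c₂ p₁ p₂ N) (hX : IsGeodesicSpace X)
    {b : X} (hb : b ∈ fixedBy X c₂) (x : X) :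
    Tendsto (fun m => dist x ((c₂ * c₁) ^ m • x)) atTop atTop := by
  have hγ : 0 < 2 * (dist p₁ p₂ - 2 * N) := by linarith [hP.lt_dist]
  rw [← tendsto_add_atTop_iff_nat 1]
  refine tendsto_atTop_mono (fun m => ?_) (tendsto_atTop_add_const_right _ (-(2 * dist b x))
    (tendsto_natCast_atTop_atTop.const_mul_atTop hγ))
  have hgrowth := hP.mul_le_dist hX m hb (z := (c₂ * c₁) ^ (m + 1) • b) (by
    rw [inv_smul_smul]
    exact fun h => connectedComponentIn_subset _ _ h hb)
  have := dist_triangle4 b x ((c₂ * c₁) ^ (m + 1) • x) ((c₂ * c₁) ^ (m + 1) • b)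
  rw [dist_smul] at this
  linarith [dist_comm b x]

theorem eventually_exists_dist_le (hP : PingPong c₁ c₂ p₁ p₂ N) (hX : IsGeodesicSpace X)
    {b : X} (hb : b ∈ fixedBy X c₂) :
    ∀ᶠ m in atTop, ∀ f, IsGeodesicFromTo f p₁ ((c₂ * c₁) ^ m • p₁) →
      ∃ s ∈ Icc 0 (dist p₁ ((c₂ * c₁) ^ m • p₁)), dist p₂ (f s) ≤ N := by
  filter_upwards [hP.eventually_pow_smul_notMem hX hb p₁] with m hm f hf
  obtain ⟨s, hs, hfs⟩ :=
    hf.exists_mem_of_mem_of_notMem (mem_connectedComponentIn hP.notMem_fixedBy₂) hm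
  exact ⟨s, hs, mem_closedBall'.1 (hP.fixedBy₂_subset hfs)⟩

/-- With `h = c₂ * c₁`, the inverse configuration `symm_inv` puts `h⁻ⁿ • p₁` and
`h ^ (m - n) • p₁` on different sides of `fixedBy X c₁`, so the geodesic crosses
`h ^ n • fixedBy X c₁`. -/
theorem eventually_eventually_exists_dist_le (hP : PingPong c₁ c₂ p₁ p₂ N)
    (hX : IsGeodesicSpace X) {a b : X} (ha : a ∈ fixedBy X c₁) (hb : b ∈ fixedBy X c₂) :
    ∀ᶠ n in atTop, ∀ᶠ m in atTop, ∀ f, IsGeodesicFromTo f p₁ ((c₂ * c₁) ^ m • p₁) →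
      ∃ s ∈ Icc 0 (dist p₁ ((c₂ * c₁) ^ m • p₁)), dist ((c₂ * c₁) ^ n • p₁) (f s) ≤ N := by
  set h := c₂ * c₁
  have hback : ∀ᶠ n in atTop, (h ^ n)⁻¹ • p₁ ∉ connectedComponentIn (fixedBy X c₁)ᶜ p₂ := by
    filter_upwards [hP.symm_inv.eventually_pow_smul_notMem hX (b := a) (by rwa [fixedBy_inv]) p₁]
      with n hn
    rwa [fixedBy_inv, ← mul_inv_rev, inv_pow] at hn
  obtain ⟨k, hk⟩ := eventually_atTop.1 (hP.eventually_pow_smul_notMem hX hb p₁)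
  filter_upwards [hback] with n hn
  filter_upwards [eventually_ge_atTop (n + k)] with m hm f hf
  obtain ⟨j, rfl⟩ : ∃ j, m = n + j := ⟨m - n, by omega⟩
  have hfwd : (h ^ n)⁻¹ • h ^ (n + j) • p₁ ∈ connectedComponentIn (fixedBy X c₁)ᶜ p₂ := by
    rw [smul_smul, pow_add, inv_mul_cancel_left]
    exact hP.mem_of_notMem₂ hX (hk j (by omega))
  obtain ⟨t, ht, hft⟩ :=
    (hf.comp_isometry (isometry_smul X (h ^ n)⁻¹)).exists_mem_of_notMem_of_mem hn hfwd
  refine ⟨t, by rwa [dist_smul] at ht, ?_⟩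
  rw [← dist_smul (h ^ n)⁻¹, inv_smul_smul]
  exact mem_closedBall'.1 (hP.fixedBy₁_subset hft)

end PingPong

end PingPong

section Completeness

variable {G X : Type*} [Group G] [MetricSpace X] [MulAction G X]

/-- Otherwise translates `v • K` disjoint from `K` come arbitrarily close to `K`, and `K` together
with a convergent sequence of the approaching points is a compact set meeting infinitely many of
its translates. -/
theorem exists_pos_finite_smul_inter_thickening [ContinuousConstSMul G X]
    (hproper : ∀ L : Set X, IsCompact L → {g : G | (g • L ∩ L).Nonempty}.Finite)
    {K : Set X} (hK : IsCompact K) :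
    ∃ ε > 0, {v : G | (v • K ∩ thickening ε K).Nonempty}.Finite := by
  by_contra! hinf
  have hv : ∀ j : ℕ, ∃ v : G, v ∉ {v : G | (v • K ∩ K).Nonempty} ∧
      (v • K ∩ thickening (1 / (j + 1)) K).Nonempty :=
    fun j => ((hinf _ (by positivity)).sdiff (hproper K hK)).nonempty.imp fun v hv => ⟨hv.2, hv.1⟩
  choose v hvK p hpK hpth using hv
  choose k hk hpk using fun j => mem_thickening_iff.1 (hpth j)
  obtain ⟨a, haK, φ, hφ, hka⟩ := hK.tendsto_subseq hk
  have hpa : Tendsto (p ∘ φ) atTop (𝓝 a) := by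
    refine hka.congr_dist (squeeze_zero (fun _ => dist_nonneg) (fun i => ?_)
      ((tendsto_one_div_add_atTop_nhds_zero_nat).comp hφ.tendsto_atTop))
    rw [dist_comm]
    exact (hpk (φ i)).le
  have hfin : (range (v ∘ φ)).Finite := by
    refine (hproper _ (hK.union hpa.isCompact_insert_range)).subset ?_
    rintro _ ⟨i, rfl⟩
    exact ⟨p (φ i), smul_set_mono subset_union_left (hpK (φ i)), .inr (.inr ⟨i, rfl⟩)⟩
  have hclosed : IsClosed (⋃ w ∈ range (v ∘ φ), w • K) :=
    (hfin.isCompact_biUnion fun w _ => hK.smul w).isClosed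
  obtain ⟨_, ⟨i, rfl⟩, ha⟩ := mem_iUnion₂.1 <| hclosed.mem_of_tendsto hpa <|
    Eventually.of_forall fun i => mem_biUnion ⟨i, rfl⟩ (hpK (φ i))
  exact hvK (φ i) ⟨a, ha, haK⟩

/-- A Cauchy sequence eventually lies in finitely many translates of the compact fundamental set. -/
theorem IsGeometricAction.completeSpace (hGA : IsGeometricAction G X) : CompleteSpace X := by
  have : IsIsometricSMul G X := ⟨hGA.isometry⟩
  obtain ⟨K, hK, hcov⟩ := hGA.cocompact
  obtain ⟨ε, hε, hfin⟩ := exists_pos_finite_smul_inter_thickening hGA.proper hK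
  refine Metric.complete_of_cauchySeq_tendsto fun u hu => ?_
  have hg : ∀ n, ∃ g : G, g⁻¹ • u n ∈ K := fun n => by
    obtain ⟨_, ⟨g, rfl⟩, k, hk, hgk⟩ := (hcov ▸ mem_univ (u n) : u n ∈ ⋃ g : G, g • K)
    exact ⟨g, by rwa [← hgk, inv_smul_smul]⟩
  choose g hg using hg
  obtain ⟨M, hM⟩ := Metric.cauchySeq_iff'.1 hu ε hε
  have hC : IsCompact (⋃ v ∈ {v : G | (v • K ∩ thickening ε K).Nonempty}, (g M * v) • K) :=
    hfin.isCompact_biUnion fun v _ => hK.smul _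
  have hmem : ∀ n ≥ M, u n ∈ ⋃ v ∈ {v : G | (v • K ∩ thickening ε K).Nonempty}, (g M * v) • K := by
    intro n hn
    refine mem_biUnion (x := (g M)⁻¹ * g n) ⟨(g M)⁻¹ • u n, ⟨_, hg n, ?_⟩, ?_⟩ ?_
    · dsimp only
      rw [mul_smul, smul_inv_smul]
    · refine mem_thickening_iff.2 ⟨_, hg M, ?_⟩
      rw [dist_smul]
      exact hM n hn
    · rw [mul_inv_cancel_left]
      exact ⟨_, hg n, smul_inv_smul _ _⟩
  obtain ⟨a, -, ha⟩ := hC.isComplete _ hu (tendsto_principal.2 (eventually_atTop.2 ⟨M, hmem⟩))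
  exact ⟨a, ha⟩

end Completeness

theorem not_isOfFinOrder_of_tendsto_dist {G X : Type*} [Group G] [PseudoMetricSpace X]
    [MulAction G X] {g : G} {x : X} (h : Tendsto (fun n : ℕ => dist x (g ^ n • x)) atTop atTop) :
    ¬IsOfFinOrder g := by
  intro hg
  obtain ⟨n, hn, hpow⟩ := isOfFinOrder_iff_pow_eq_one.1 hg
  obtain ⟨M, hM⟩ := (h.eventually_ge_atTop 1).exists_forall_of_atTop
  have := hM (n * M) (Nat.le_mul_of_pos_left M hn)
  rw [pow_mul, hpow, one_pow, one_smul, dist_self] at this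
  norm_num at this

section Rays

variable {X : Type*} [MetricSpace X]

/-- Compare, by convexity, the points at the same fraction `t / d(x, y)` of the geodesics to `y`
and to `f' s`. -/
theorem IsGeodesicFromTo.dist_apply_le_of_dist_le (hX : IsCAT0Space X) {f f' : ℝ → X}
    {x y y' : X} (hf : IsGeodesicFromTo f x y) (hf' : IsGeodesicFromTo f' x y') {s t N : ℝ}
    (hs : s ∈ Icc 0 (dist x y')) (hN : dist y (f' s) ≤ N) (ht : t ∈ Icc 0 (dist x y))
    (ht' : t ≤ dist x y') (hy : 0 < dist x y) :
    dist (f t) (f' t) ≤ 2 * N * t / dist x y := by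
  set l := t / dist x y with hl_def
  have hl : l ∈ Icc (0 : ℝ) 1 := ⟨div_nonneg ht.1 hy.le, div_le_one_of_le₀ ht.2 hy.le⟩
  have hconv := hf.dist_le_mul hX (hf'.restrict hs) hl
  rw [hf'.dist_left hs, div_mul_cancel₀ t hy.ne'] at hconv
  have hls : l * s ∈ Icc 0 (dist x y') :=
    ⟨mul_nonneg hl.1 hs.1, (mul_le_of_le_one_left hs.1 hl.2).trans hs.2⟩
  have hsd : |s - dist x y| ≤ N := by
    have := abs_dist_sub_le (f' s) y x
    rw [dist_comm (f' s) x, hf'.dist_left hs, dist_comm y x] at this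
    exact this.trans (by rwa [dist_comm])
  have hshift : dist (f' (l * s)) (f' t) = l * |s - dist x y| := by
    rw [hf'.2.2 _ hls t ⟨ht.1, ht'⟩, ← abs_of_nonneg hl.1, ← abs_mul, abs_of_nonneg hl.1]
    congr 1
    rw [hl_def]
    field_simp
  calc dist (f t) (f' t) ≤ dist (f t) (f' (l * s)) + dist (f' (l * s)) (f' t) :=
        dist_triangle _ _ _
    _ ≤ l * N + l * N := add_le_add (hconv.trans (mul_le_mul_of_nonneg_left hN hl.1))
        (hshift ▸ mul_le_mul_of_nonneg_left hsd hl.1)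
    _ = 2 * N * t / dist x y := by rw [hl_def]; ring

theorem IsCAT0Space.cauchySeq_apply_min (hX : IsCAT0Space X) {x₀ : X} {z : ℕ → X}
    {f : ℕ → ℝ → X} (hf : ∀ n, IsGeodesicFromTo (f n) x₀ (z n)) {N : ℝ}
    (hz : Tendsto (fun n => dist x₀ (z n)) atTop atTop)
    (hnear : ∀ᶠ n in atTop, ∀ᶠ m in atTop, ∃ s ∈ Icc 0 (dist x₀ (z m)), dist (z n) (f m s) ≤ N)
    {t : ℝ} (ht : 0 ≤ t) : CauchySeq fun m => f m (min t (dist x₀ (z m))) := by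
  rw [Metric.cauchySeq_iff]
  intro ε hε
  have hsmall : Tendsto (fun n => 2 * N * t / dist x₀ (z n)) atTop (𝓝 0) :=
    tendsto_const_nhds.div_atTop hz
  obtain ⟨n, hn, hnε, htn, hpos⟩ := (hnear.and <|
    (hsmall.eventually (gt_mem_nhds (half_pos hε))).and <|
    (hz.eventually_ge_atTop t).and (hz.eventually_gt_atTop 0)).exists
  obtain ⟨M, hM⟩ := eventually_atTop.1 (hn.and (hz.eventually_ge_atTop t))
  have hclose : ∀ m ≥ M, dist (f m (min t (dist x₀ (z m)))) (f n t) < ε / 2 := by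
    intro m hm
    obtain ⟨⟨s, hs, hsN⟩, htm⟩ := hM m hm
    rw [min_eq_left htm, dist_comm]
    exact ((hf n).dist_apply_le_of_dist_le hX (hf m) hs hsN ⟨ht, htn⟩ htm hpos).trans_lt hnε
  exact ⟨M, fun m hm m' hm' => by
    linarith [dist_triangle_right (f m (min t (dist x₀ (z m))))
      (f m' (min t (dist x₀ (z m')))) (f n t), hclose m hm, hclose m' hm']⟩

theorem IsCAT0Space.exists_tendstoBoundary [CompleteSpace X] (hX : IsCAT0Space X) {x₀ : X}
    {z : ℕ → X} {N : ℝ} (hz : Tendsto (fun n => dist x₀ (z n)) atTop atTop)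
    (hnear : ∀ᶠ n in atTop, ∀ᶠ m in atTop, ∀ f, IsGeodesicFromTo f x₀ (z m) →
      ∃ s ∈ Icc 0 (dist x₀ (z m)), dist (z n) (f s) ≤ N) :
    ∃ β : Boundary X x₀, TendstoBoundary x₀ z β := by
  choose f hf using fun n => hX.1 x₀ (z n)
  have hlim : ∀ t, ∃ p, 0 ≤ t → Tendsto (fun m => f m (min t (dist x₀ (z m)))) atTop (𝓝 p) := by
    intro t
    by_cases ht : 0 ≤ t
    · obtain ⟨p, hp⟩ := cauchySeq_tendsto_of_complete <| hX.cauchySeq_apply_min hf hz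
        (hnear.mono fun n hn => hn.mono fun m hm => hm _ (hf m)) ht
      exact ⟨p, fun _ => hp⟩
    · exact ⟨x₀, fun h => absurd h ht⟩
  choose β hβ using hlim
  have hβ₀ : β 0 = x₀ := by
    refine tendsto_nhds_unique (hβ 0 le_rfl) ?_
    simp only [min_eq_left dist_nonneg, (hf _).1, tendsto_const_nhds]
  have hβdist : ∀ s t, 0 ≤ s → 0 ≤ t → dist (β s) (β t) = |s - t| := by
    intro s t hs ht
    refine tendsto_nhds_unique ((hβ s hs).dist (hβ t ht)) (tendsto_const_nhds.congr' ?_)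
    filter_upwards [hz.eventually_ge_atTop (max s t)] with m hm
    have hsm := (le_max_left s t).trans hm
    have htm := (le_max_right s t).trans hm
    rw [min_eq_left hsm, min_eq_left htm]
    exact ((hf m).2.2 s ⟨hs, hsm⟩ t ⟨ht, htm⟩).symm
  refine ⟨⟨β, hβ₀, hβdist⟩, hz, fun f' hf' t ht => (hβ t ht).congr fun m => ?_⟩
  exact (hf m).eqOn hX (hf' m) ⟨le_min ht dist_nonneg, min_le_right _ _⟩

theorem TendstoBoundary.infDist_rayImage_le {x₀ : X} {z : ℕ → X} {β : Boundary X x₀}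
    (hβ : TendstoBoundary x₀ z β) (hX : IsGeodesicSpace X) {y : X} {N : ℝ}
    (hnear : ∀ᶠ m in atTop, ∀ f, IsGeodesicFromTo f x₀ (z m) →
      ∃ s ∈ Icc 0 (dist x₀ (z m)), dist y (f s) ≤ N) :
    infDist y (rayImage β) ≤ N := by
  choose f hf using fun n => hX x₀ (z n)
  obtain ⟨M, hM⟩ := eventually_atTop.1 hnear
  choose s hs hsy using fun i => hM (i + M) (Nat.le_add_left M i) _ (hf (i + M))
  have hsb : ∀ i, s i ∈ Icc 0 (dist x₀ y + N) := fun i => by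
    refine ⟨(hs i).1, ?_⟩
    have := dist_triangle x₀ y (f (i + M) (s i))
    rw [(hf _).dist_left (hs i)] at this
    linarith [hsy i]
  obtain ⟨s₀, hs₀, φ, hφ, hsφ⟩ := isCompact_Icc.tendsto_subseq hsb
  have hk : Tendsto (fun i => φ i + M) atTop atTop :=
    tendsto_atTop_mono (fun i => Nat.le_add_right _ _) hφ.tendsto_atTop
  have hq : Tendsto (fun i => f (φ i + M) (s (φ i))) atTop (𝓝 (β.1 s₀)) := by
    refine ((hβ.2 f hf s₀ hs₀.1).comp hk).congr_dist (squeeze_zero' (Eventually.of_forall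
      fun _ => dist_nonneg) ?_ (tendsto_iff_dist_tendsto_zero.1 hsφ))
    filter_upwards [(hβ.1.comp hk).eventually_ge_atTop s₀] with i hi
    simp only [Function.comp_apply] at hi ⊢
    rw [min_eq_left hi, (hf _).2.2 _ ⟨hs₀.1, hi⟩ _ (hs _), Real.dist_eq, abs_sub_comm]
  have hdist : dist y (β.1 s₀) ≤ N :=
    le_of_tendsto (tendsto_const_nhds.dist hq) (Eventually.of_forall fun i => hsy (φ i))
  exact (infDist_le_dist_of_mem (show β.1 s₀ ∈ rayImage β from ⟨s₀, hs₀.1, rfl⟩)).trans hdist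

end Rays

theorem exists_infinite_order_ray_near_orbit_point_general
    {G X : Type*} [Group G] [MetricSpace X] [MulAction G X]
    (hGA : IsGeometricAction G X) (hCAT : IsCAT0Space X) (g0 : G)
    (hdisc : ¬ IsPreconnected {x : X | g0 • x = x}ᶜ)
    (hcomp : ∀ x ∈ {x : X | g0 • x = x}ᶜ,
      GeodesicConvex (connectedComponentIn {x : X | g0 • x = x}ᶜ x) ∧
        g0 • connectedComponentIn {x : X | g0 • x = x}ᶜ x ≠
          connectedComponentIn {x : X | g0 • x = x}ᶜ x)
    (x0 : X) (N : ℝ)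
    (hF : {x : X | g0 • x = x} ⊆ Metric.closedBall x0 N) :
    ∀ g : G, dist x0 (g • x0) > 2 * N →
      ∃ h : G, ¬ IsOfFinOrder h ∧
        ∃ β : Boundary X x0, TendstoBoundary x0 (fun n => (h ^ n) • x0) β ∧
          infDist (g • x0) (rayImage β) ≤ N := by
  intro g hg
  have : IsIsometricSMul G X := ⟨hGA.isometry⟩
  have : CompleteSpace X := hGA.completeSpace
  have hmoves : MovesComponents X g0 := fun x hx => (hcomp x hx).2
  have hP : PingPong g0 (g * g0 * g⁻¹) x0 (g • x0) N :=
    { moves₁ := hmoves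
      moves₂ := hmoves.conj g
      fixedBy₁_subset := hF
      fixedBy₂_subset := by
        rw [← smul_fixedBy, ← Metric.smul_closedBall]
        exact smul_set_mono hF
      lt_dist := hg }
  obtain ⟨a, ha⟩ : (fixedBy X g0).Nonempty := by
    refine nonempty_iff_ne_empty.2 fun h => hdisc ?_
    rw [show {x : X | g0 • x = x} = fixedBy X g0 from rfl, h, compl_empty]
    exact hCAT.1.isPreconnected_univ
  have hb : g • a ∈ fixedBy X (g * g0 * g⁻¹) := by
    rw [← smul_fixedBy]
    exact smul_mem_smul_set ha
  have hdist := hP.tendsto_dist_pow_smul hCAT.1 hb x0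
  obtain ⟨β, hβ⟩ := hCAT.exists_tendstoBoundary hdist
    (hP.eventually_eventually_exists_dist_le hCAT.1 ha hb)
  exact ⟨_, not_isOfFinOrder_of_tendsto_dist hdist, β, hβ,
    hβ.infDist_rayImage_le hCAT.1 (hP.eventually_exists_dist_le hCAT.1 hb)⟩

/-- Key step in the proof of the main theorem: under the hypotheses of the main theorem,
with basepoint `x0` and `N > 0` such that `F_{g0} ⊆ B(x0, N)`, for every `g ∈ G` with
`d(x0, g x0) > 2N` there exists an infinite-order element `h ∈ G` such that
`d(g x0, Im ξ_{h^∞}) ≤ N`, where `ξ_{h^∞}` is the geodesic ray from `x0` to `h^∞`. -/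
theorem exists_infinite_order_ray_near_orbit_point
    {G X : Type*} [Group G] [MetricSpace X] [MulAction G X]
    (hGA : IsGeometricAction G X) (hCAT : IsCAT0Space X) (g0 : G)
    (hZ : {h : G | g0 * h = h * g0}.Finite)
    (hdisc : ¬ IsPreconnected {x : X | g0 • x = x}ᶜ)
    (hcomp : ∀ x ∈ {x : X | g0 • x = x}ᶜ,
      GeodesicConvex (connectedComponentIn {x : X | g0 • x = x}ᶜ x) ∧
        g0 • connectedComponentIn {x : X | g0 • x = x}ᶜ x ≠
          connectedComponentIn {x : X | g0 • x = x}ᶜ x)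
    (x0 : X) (N : ℝ) (hN : 0 < N)
    (hF : {x : X | g0 • x = x} ⊆ Metric.closedBall x0 N) :
    ∀ g : G, dist x0 (g • x0) > 2 * N →
      ∃ h : G, ¬ IsOfFinOrder h ∧
        ∃ β : Boundary X x0, TendstoBoundary x0 (fun n => (h ^ n) • x0) β ∧
          infDist (g • x0) (rayImage β) ≤ N :=
  exists_infinite_order_ray_near_orbit_point_general hGA hCAT g0 hdisc hcomp x0 N hF
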